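/- Let a, b ∈ ℂ be such that a, a+b+1/2 and 2a+2b are not nonpositive integers and are nonzero. Then for every x ∈ ℂ with |x| < 1 (a form of Orr's formula): ( Σ_{k=0}^∞ (a)_k (b)_k x^k / ((a+b+1/2)_k · k!) ) · ( Σ_{k=0}^∞ (a+1)_k (b)_k x^k / ((a+b+1/2)_k · k!) ) = Σ_{k=0}^∞ (2a+1)_k (2b)_k (a+b)_k x^k / ((a+b+1/2)_k (2a+2b)_k · k!). -/
import Mathlib
set_option maxHeartbeats 2000000
open Finset
open scoped BigOperators Nat
/-- Rising factorial (Pochhammer symbol) `(z)_k = z (z+1) ⋯ (z+k-1)`. -/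
noncomputable def rf (z : ℂ) (k : ℕ) : ℂ := ∏ i ∈ Finset.range k, (z + i)
lemma rf_zero (z : ℂ) : rf z 0 = 1 := by simp [rf]
lemma rf_succ (z : ℂ) (k : ℕ) : rf z (k + 1) = rf z k * (z + k) := Finset.prod_range_succ _ _
lemma rf_succ' (z : ℂ) (k : ℕ) : rf z (k + 1) = z * rf (z + 1) k := by
  rw [rf, Finset.prod_range_succ', rf]
  simp only [Nat.cast_zero, add_zero, Nat.cast_add, Nat.cast_one]
  rw [mul_comm]
  exact congrArg _ (Finset.prod_congr rfl fun i _ => by ring)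
lemma rf_ne_zero {z : ℂ} (hz : ∀ n : ℕ, z + n ≠ 0) (k : ℕ) : rf z k ≠ 0 :=
  Finset.prod_ne_zero_iff.2 fun i _ => hz i

/-- the Clausen term -/
noncomputable def uu (a b : ℂ) (j : ℕ) : ℂ :=
  rf a j * rf b j / (rf (a + b + 1 / 2) j * (j.factorial : ℂ))

/-- WZ certificate multiplier -/
noncomputable def sg (a b : ℂ) (n j : ℂ) : ℂ :=
  j * (1 - (a+b) - 2*(a+b)^2 + (3/2 - 3*(a+b))*n - 3*(n+1)*j + 2*j^2)

section
variable {a b : ℂ} (h1 : ∀ n : ℕ, a + b + 1 / 2 + (n : ℂ) ≠ 0)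



include h1 in
lemma uu_succ_mul (j : ℕ) :
    uu a b (j + 1) * ((a + b + 1/2 + j) * ((j:ℂ) + 1)) = uu a b j * ((a + j) * (b + j)) := by
  have hfac : ((j.factorial : ℂ)) ≠ 0 := Nat.cast_ne_zero.2 j.factorial_ne_zero
  have hj1 : ((j : ℂ) + 1) ≠ 0 := Nat.cast_add_one_ne_zero j
  have hrfc := rf_ne_zero h1 j
  have hcj : a + b + 1/2 + (j:ℂ) ≠ 0 := h1 j
  rw [uu, uu, rf_succ, rf_succ, rf_succ, Nat.factorial_succ]
  push_cast
  rw [div_mul_eq_mul_div, div_mul_eq_mul_div,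
    div_eq_div_iff (by exact mul_ne_zero (mul_ne_zero hrfc hcj) (mul_ne_zero hj1 hfac))
      (mul_ne_zero hrfc hfac)]
  ring

include h1 in
lemma telescope_step (j m : ℕ) :
    (a+b+1/2+(j+m:ℕ)) * (2*a+2*b+(j+m:ℕ)) * ((j+m:ℕ)+1) * (uu a b j * uu a b (m+1))
      - (2*a+(j+m:ℕ)) * (2*b+(j+m:ℕ)) * (a+b+(j+m:ℕ)) * (uu a b j * uu a b m)
    = sg a b (j+m:ℕ) ((j:ℂ)+1) * (uu a b (j+1) * uu a b m)
      - sg a b (j+m:ℕ) (j:ℂ) * (uu a b j * uu a b (m+1)) := by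
  have hj1 : ((j : ℂ) + 1) ≠ 0 := Nat.cast_add_one_ne_zero j
  have hm1 : ((m : ℂ) + 1) ≠ 0 := Nat.cast_add_one_ne_zero m
  have hcj : a + b + 1/2 + (j:ℂ) ≠ 0 := h1 j
  have hcm : a + b + 1/2 + (m:ℂ) ≠ 0 := h1 m
  have hD : (a + b + 1/2 + (j:ℂ)) * ((j:ℂ) + 1) * ((a + b + 1/2 + (m:ℂ)) * ((m:ℂ) + 1)) ≠ 0 :=
    mul_ne_zero (mul_ne_zero hcj hj1) (mul_ne_zero hcm hm1)
  refine mul_right_cancel₀ hD ?_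
  have e1 := uu_succ_mul h1 j
  have e2 := uu_succ_mul h1 m
  unfold sg
  push_cast
  linear_combination
    (-((((j:ℂ)+1) * (1 - (a+b) - 2*(a+b)^2 + (3/2 - 3*(a+b))*((j:ℂ)+(m:ℂ)) - 3*(((j:ℂ)+(m:ℂ))+1)*((j:ℂ)+1) + 2*((j:ℂ)+1)^2))) * uu a b m * ((a + b + 1/2 + (m:ℂ)) * ((m:ℂ) + 1))) * e1
    + (((a+b+1/2+((j:ℂ)+(m:ℂ))) * (2*a+2*b+((j:ℂ)+(m:ℂ))) * (((j:ℂ)+(m:ℂ))+1)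
        + ((j:ℂ) * (1 - (a+b) - 2*(a+b)^2 + (3/2 - 3*(a+b))*((j:ℂ)+(m:ℂ)) - 3*(((j:ℂ)+(m:ℂ))+1)*(j:ℂ) + 2*(j:ℂ)^2))) * uu a b j * ((a + b + 1/2 + (j:ℂ)) * ((j:ℂ) + 1))) * e2

lemma uu_zero (a b : ℂ) : uu a b 0 = 1 := by simp [uu, rf_zero]

/-- Clausen convolution coefficient -/
noncomputable def cl (a b : ℂ) (n : ℕ) : ℂ :=
  ∑ j ∈ Finset.range (n+1), uu a b j * uu a b (n - j)

include h1 in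
lemma clausen_rec (n : ℕ) :
    (a+b+1/2+(n:ℂ)) * (2*a+2*b+(n:ℂ)) * ((n:ℂ)+1) * cl a b (n+1)
      = (2*a+(n:ℂ)) * (2*b+(n:ℂ)) * (a+b+(n:ℂ)) * cl a b n := by
  have tel : ∀ j ∈ Finset.range (n+1),
      (a+b+1/2+(n:ℂ)) * (2*a+2*b+(n:ℂ)) * ((n:ℂ)+1) * (uu a b j * uu a b (n + 1 - j))
        - (2*a+(n:ℂ)) * (2*b+(n:ℂ)) * (a+b+(n:ℂ)) * (uu a b j * uu a b (n - j))
        = sg a b (n:ℂ) (((j+1:ℕ)):ℂ) * (uu a b (j+1) * uu a b (n + 1 - (j+1)))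
          - sg a b (n:ℂ) (j:ℂ) * (uu a b j * uu a b (n + 1 - j)) := by
    intro j hj
    obtain ⟨m, hm⟩ := Nat.le.dest (Nat.lt_succ_iff.mp (Finset.mem_range.mp hj))
    subst hm
    have e1 : j + m + 1 - j = m + 1 := by omega
    have e2 : j + m - j = m := by omega
    have e3 : j + m + 1 - (j + 1) = m := by omega
    rw [e1, e2, e3]
    have := telescope_step h1 j m
    push_cast at this ⊢
    linear_combination this
  have hsum : ∑ j ∈ Finset.range (n+1),
      ((a+b+1/2+(n:ℂ)) * (2*a+2*b+(n:ℂ)) * ((n:ℂ)+1) * (uu a b j * uu a b (n + 1 - j))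
        - (2*a+(n:ℂ)) * (2*b+(n:ℂ)) * (a+b+(n:ℂ)) * (uu a b j * uu a b (n - j)))
        = sg a b (n:ℂ) ((n+1:ℕ):ℂ) * (uu a b (n+1) * uu a b (n + 1 - (n+1)))
          - sg a b (n:ℂ) ((0:ℕ):ℂ) * (uu a b 0 * uu a b (n + 1 - 0)) := by
    rw [Finset.sum_congr rfl tel]
    exact Finset.sum_range_sub (f := fun j => sg a b (n:ℂ) ((j:ℂ)) * (uu a b j * uu a b (n + 1 - j))) (n+1)
  rw [Nat.sub_self] at hsum
  have hb : sg a b (n:ℂ) ((n+1:ℕ):ℂ) = -((a+b+1/2+(n:ℂ)) * (2*a+2*b+(n:ℂ)) * ((n:ℂ)+1)) := by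
    unfold sg; push_cast; ring
  rw [hb, uu_zero] at hsum
  simp only [Nat.cast_zero, sg, zero_mul, mul_one] at hsum
  have hclP : cl a b (n+1)
      = (∑ j ∈ Finset.range (n+1), uu a b j * uu a b (n + 1 - j)) + uu a b (n+1) := by
    rw [cl, Finset.sum_range_succ, Nat.sub_self, uu_zero, mul_one]
  rw [hclP, cl, mul_add, Finset.mul_sum, Finset.mul_sum]
  rw [Finset.sum_sub_distrib] at hsum
  linear_combination hsum

/-- target Clausen closed form -/
noncomputable def rc (a b : ℂ) (n : ℕ) : ℂ :=
  rf (2*a) n * rf (2*b) n * rf (a+b) n / (rf (a+b+1/2) n * rf (2*a+2*b) n * (n.factorial : ℂ))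

variable (h2 : ∀ n : ℕ, 2*a + 2*b + (n : ℂ) ≠ 0)

include h1 h2 in
lemma clausen_eq (n : ℕ) : cl a b n = rc a b n := by
  induction n with
  | zero => simp [cl, rc, uu, rf_zero]
  | succ n ih =>
      have hP : (a+b+1/2+(n:ℂ)) * (2*a+2*b+(n:ℂ)) * ((n:ℂ)+1) ≠ 0 :=
        mul_ne_zero (mul_ne_zero (h1 n) (h2 n)) (Nat.cast_add_one_ne_zero n)
      have hrec := clausen_rec h1 n
      rw [ih] at hrec
      have hrcrec : (a+b+1/2+(n:ℂ)) * (2*a+2*b+(n:ℂ)) * ((n:ℂ)+1) * rc a b (n+1)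
          = (2*a+(n:ℂ)) * (2*b+(n:ℂ)) * (a+b+(n:ℂ)) * rc a b n := by
        have hfac : ((n.factorial : ℂ)) ≠ 0 := Nat.cast_ne_zero.2 n.factorial_ne_zero
        have hn1 : ((n : ℂ) + 1) ≠ 0 := Nat.cast_add_one_ne_zero n
        have hc := rf_ne_zero h1 n
        have h2s := rf_ne_zero h2 n
        rw [rc, rc, rf_succ, rf_succ, rf_succ, rf_succ, rf_succ, Nat.factorial_succ]
        push_cast
        rw [mul_div_assoc', mul_div_assoc',
          div_eq_div_iff
            (mul_ne_zero (mul_ne_zero (mul_ne_zero hc (h1 n)) (mul_ne_zero h2s (h2 n)))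
              (mul_ne_zero hn1 hfac))
            (mul_ne_zero (mul_ne_zero hc h2s) hfac)]
        ring
      exact mul_left_cancel₀ hP (hrec.trans hrcrec.symm)

/-- Orr term numerator -/
noncomputable def vv (a b : ℂ) (j : ℕ) : ℂ :=
  rf (a+1) j * rf b j / (rf (a+b+1/2) j * (j.factorial : ℂ))

lemma a_mul_vv (j : ℕ) : a * vv a b j = uu a b j * (a + j) := by
  have key : a * rf (a+1) j = rf a j * (a + j) := by
    have e1 := rf_succ' a j
    have e2 := rf_succ a j
    linear_combination e2 - e1
  rw [vv, uu, mul_div_assoc', div_mul_eq_mul_div]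
  congr 1
  linear_combination rf b j * key

/-- Orr convolution coefficient -/
noncomputable def od (a b : ℂ) (n : ℕ) : ℂ :=
  ∑ j ∈ Finset.range (n+1), uu a b j * vv a b (n - j)

lemma od_reflect (n : ℕ) : 2*a * od a b n = (2*a + (n:ℂ)) * cl a b n := by
  have key : ∀ j ∈ Finset.range (n+1),
      a * (uu a b j * vv a b (n - j)) = uu a b j * uu a b (n-j) * (a + ((n-j:ℕ):ℂ)) :=
    fun j _ => by linear_combination uu a b j * a_mul_vv (a := a) (b := b) (n - j)
  have e1 : a * od a b n
      = ∑ j ∈ Finset.range (n+1), uu a b j * uu a b (n-j) * (a + ((n-j:ℕ):ℂ)) := by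
    rw [od, Finset.mul_sum]; exact Finset.sum_congr rfl key
  have e2 : a * od a b n
      = ∑ j ∈ Finset.range (n+1), uu a b j * uu a b (n-j) * (a + (j:ℂ)) := by
    rw [e1, ← Finset.sum_range_reflect]
    refine Finset.sum_congr rfl fun j hj => ?_
    have hjn : j ≤ n := Nat.lt_succ_iff.mp (Finset.mem_range.mp hj)
    have g1 : n + 1 - 1 - j = n - j := by omega
    have g2 : n - (n - j) = j := by omega
    rw [g1, g2]
    ring
  have e3 : (∑ j ∈ Finset.range (n+1), uu a b j * uu a b (n-j) * (a + ((n-j:ℕ):ℂ)))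
      + (∑ j ∈ Finset.range (n+1), uu a b j * uu a b (n-j) * (a + (j:ℂ)))
      = (2*a + (n:ℂ)) * cl a b n := by
    rw [cl, Finset.mul_sum, ← Finset.sum_add_distrib]
    refine Finset.sum_congr rfl fun j hj => ?_
    have hjn : j ≤ n := Nat.lt_succ_iff.mp (Finset.mem_range.mp hj)
    have hcast : ((n-j:ℕ):ℂ) + (j:ℂ) = (n:ℂ) := by
      exact_mod_cast congrArg (Nat.cast : ℕ → ℂ) (Nat.sub_add_cancel hjn)
    linear_combination (uu a b j * uu a b (n-j)) * hcast
  linear_combination e1 + e2 + e3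

/-- Orr closed form coefficient -/
noncomputable def oc (a b : ℂ) (n : ℕ) : ℂ :=
  rf (2*a+1) n * rf (2*b) n * rf (a+b) n / (rf (a+b+1/2) n * rf (2*a+2*b) n * (n.factorial : ℂ))

lemma oc_reflect (n : ℕ) : 2*a * oc a b n = (2*a + (n:ℂ)) * rc a b n := by
  have key : 2*a * rf (2*a+1) n = rf (2*a) n * (2*a + n) := by
    have e1 := rf_succ' (2*a) n
    have e2 := rf_succ (2*a) n
    linear_combination e2 - e1
  rw [oc, rc, mul_div_assoc', mul_div_assoc']
  congr 1
  linear_combination (rf (2*b) n * rf (a+b) n) * key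

include h1 h2 in
lemma od_eq_oc (ha : a ≠ 0) (n : ℕ) : od a b n = oc a b n := by
  have h2a : (2:ℂ)*a ≠ 0 := mul_ne_zero two_ne_zero ha
  apply mul_left_cancel₀ h2a
  rw [od_reflect, clausen_eq h1 h2 n, oc_reflect]
end

open Filter in
lemma ratio_tendsto (w c : ℂ) (hc : ∀ k : ℕ, c + (k:ℂ) ≠ 0) :
    Tendsto (fun k : ℕ => (w + k) / (c + k)) atTop (nhds 1) := by
  have hnorm : Tendsto (fun k : ℕ => ‖c + (k:ℂ)‖) atTop atTop := by
    apply tendsto_atTop_mono (f := fun k : ℕ => (k:ℝ) - ‖c‖)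
    · intro k
      have h1 : ‖(k:ℂ)‖ ≤ ‖c + k‖ + ‖c‖ := by
        calc ‖(k:ℂ)‖ = ‖(c + k) + (-c)‖ := by ring_nf
        _ ≤ ‖c + (k:ℂ)‖ + ‖(-c)‖ := norm_add_le _ _
        _ = ‖c + (k:ℂ)‖ + ‖c‖ := by rw [norm_neg]
      have h2 : ‖(k:ℂ)‖ = (k:ℝ) := by
        simp
      linarith
    · exact tendsto_atTop_add_const_right _ _ tendsto_natCast_atTop_atTop
  have hzero : Tendsto (fun k : ℕ => (w - c)/(c + (k:ℂ))) atTop (nhds 0) := by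
    rw [tendsto_zero_iff_norm_tendsto_zero]
    simp only [norm_div]
    exact hnorm.const_div_atTop ‖w - c‖
  have heq : ∀ k : ℕ, 1 + (w - c)/(c + (k:ℂ)) = (w + k) / (c + k) := by
    intro k
    rw [eq_div_iff (hc k), add_mul, div_mul_cancel₀ _ (hc k), one_mul]
    ring
  have h := (tendsto_const_nhds (x := (1:ℂ)) (f := atTop)).add hzero
  rw [add_zero] at h
  exact h.congr heq

open Filter in
lemma summable_aux (z w c : ℂ) (hc : ∀ k : ℕ, c + (k:ℂ) ≠ 0) (x : ℂ) (hx : ‖x‖ < 1) :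
    Summable fun k : ℕ => ‖rf z k * rf w k * x ^ k / (rf c k * (k.factorial : ℂ))‖ := by
  set f : ℕ → ℂ := fun k => rf z k * rf w k * x ^ k / (rf c k * (k.factorial : ℂ)) with hf
  have hrat : ∀ k : ℕ, f (k+1) = f k * (x * ((z+k)/(1+(k:ℂ))) * ((w+k)/(c+k))) := by
    intro k
    have hfac : ((k.factorial : ℂ)) ≠ 0 := Nat.cast_ne_zero.2 k.factorial_ne_zero
    have hk1 : (1 + (k:ℂ)) ≠ 0 := by rw [add_comm]; exact Nat.cast_add_one_ne_zero k
    have hrfc := rf_ne_zero hc k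
    rw [hf]
    simp only [rf_succ, Nat.factorial_succ]
    push_cast
    field_simp
    ring
  have htend : Tendsto (fun k : ℕ => ‖x * ((z+k)/(1+(k:ℂ))) * ((w+k)/(c+k))‖) atTop (nhds ‖x‖) := by
    have t1 := ratio_tendsto z 1 (fun k => by rw [add_comm]; exact Nat.cast_add_one_ne_zero k)
    have t2 := ratio_tendsto w c hc
    have t3 := ((tendsto_const_nhds (x := x) (f := atTop)).mul t1).mul t2
    rw [mul_one, mul_one] at t3
    exact t3.norm
  set r : ℝ := (1 + ‖x‖)/2 with hrdef
  have hr1 : r < 1 := by rw [hrdef]; linarith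
  have hxr : ‖x‖ < r := by rw [hrdef]; linarith
  have hev : ∀ᶠ k in atTop, ‖f (k+1)‖ ≤ r * ‖f k‖ := by
    filter_upwards [htend.eventually_le_const hxr] with k hk
    rw [hrat k, norm_mul]
    calc ‖f k‖ * ‖x * ((z+k)/(1+(k:ℂ))) * ((w+k)/(c+k))‖
        ≤ ‖f k‖ * r := mul_le_mul_of_nonneg_left hk (norm_nonneg _)
      _ = r * ‖f k‖ := mul_comm _ _
  refine summable_of_ratio_norm_eventually_le hr1 ?_
  filter_upwards [hev] with k hk
  rwa [Real.norm_of_nonneg (norm_nonneg _), Real.norm_of_nonneg (norm_nonneg _)]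

theorem orr_formula (a b : ℂ)
    (ha : ∀ n : ℕ, a ≠ -(n : ℂ))
    (h1 : ∀ n : ℕ, a + b + 1 / 2 ≠ -(n : ℂ))
    (h2 : ∀ n : ℕ, 2 * a + 2 * b ≠ -(n : ℂ))
    (x : ℂ) (hx : ‖x‖ < 1) :
    (∑' k : ℕ, rf a k * rf b k * x ^ k / (rf (a + b + 1 / 2) k * (k.factorial : ℂ))) *
      (∑' k : ℕ, rf (a + 1) k * rf b k * x ^ k / (rf (a + b + 1 / 2) k * (k.factorial : ℂ))) =
      ∑' k : ℕ, rf (2 * a + 1) k * rf (2 * b) k * rf (a + b) k * x ^ k /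
        (rf (a + b + 1 / 2) k * rf (2 * a + 2 * b) k * (k.factorial : ℂ)) := by
  have hc : ∀ k : ℕ, a + b + 1/2 + (k:ℂ) ≠ 0 :=
    fun k hk => h1 k (eq_neg_of_add_eq_zero_left hk)
  have h2' : ∀ k : ℕ, 2*a + 2*b + (k:ℂ) ≠ 0 :=
    fun k hk => h2 k (eq_neg_of_add_eq_zero_left hk)
  have ha' : a ≠ 0 := by
    have := ha 0
    simpa using this
  have hsf := summable_aux a b (a + b + 1/2) hc x hx
  have hsg := summable_aux (a+1) b (a + b + 1/2) hc x hx
  rw [tsum_mul_tsum_eq_tsum_sum_antidiagonal_of_summable_norm hsf hsg]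
  refine tsum_congr fun n => ?_
  rw [Finset.Nat.sum_antidiagonal_eq_sum_range_succ_mk]
  have hterm : ∀ k ∈ Finset.range (n+1),
      rf a k * rf b k * x ^ k / (rf (a + b + 1 / 2) k * (k.factorial : ℂ)) *
        (rf (a + 1) (n-k) * rf b (n-k) * x ^ (n-k) /
          (rf (a + b + 1 / 2) (n-k) * ((n-k).factorial : ℂ)))
      = uu a b k * vv a b (n-k) * x ^ n := by
    intro k hk
    have hkn : k ≤ n := Nat.lt_succ_iff.mp (Finset.mem_range.mp hk)
    have hpow : x ^ k * x ^ (n-k) = x ^ n := by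
      rw [← pow_add]
      congr 1
      omega
    rw [uu, vv]
    linear_combination (rf a k * rf b k / (rf (a + b + 1 / 2) k * (k.factorial : ℂ)) *
      (rf (a + 1) (n-k) * rf b (n-k) / (rf (a + b + 1 / 2) (n-k) * ((n-k).factorial : ℂ)))) * hpow
  rw [Finset.sum_congr rfl hterm, ← Finset.sum_mul]
  have hod : (∑ k ∈ Finset.range (n+1), uu a b k * vv a b (n-k)) = od a b n := rfl
  rw [hod, od_eq_oc hc h2' ha' n, oc]
  ring
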